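/- Let f(q) = ∑_{n=0}^∞ q^n a_n be a quaternionic power series converging on B(0;1), with f(0)=0, f'(0)=1, and all coefficients a_n real. If f is injective on B(0;1) and its image f(B(0;1)∩ℂ_I) (for any/each imaginary unit I) is a starlike subset of ℂ_I, then f(B(0;1)) is a starlike subset of ℍ: for every t ∈ [0,1] and every q ∈ B(0;1) there exists p ∈ B(0;1) with t·f(q) = f(p). -/

import Mathlib

/-!
Every quaternion lies on a slice `φ(ℂ)`, where `φ : ℂ → ℍ` is an `ℝ`-algebra embedding (sending
`i` to an imaginary unit), and every such `φ` is an isometry. As the coefficients are real,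
`f ∘ φ = φ ∘ g` on the unit disc for the single complex function `g z = ∑ aₙ zⁿ`. Starlikeness of
the `I`-slice gives `t • g z = g w` for some `w` in the disc, and applying any other `φ` carries this
identity to the slice through `q`.
-/
open Quaternion ComplexConjugate

namespace Quaternion

theorem re_eq_zero_of_mul_self_eq_neg_one {J : ℍ} (hJ : J * J = -1) : J.re = 0 := by
  have h1 := congrArg QuaternionAlgebra.re hJ
  have h2 := congrArg QuaternionAlgebra.imI hJ
  have h3 := congrArg QuaternionAlgebra.imJ hJ
  have h4 := congrArg QuaternionAlgebra.imK hJ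
  simp only [re_mul, imI_mul, imJ_mul, imK_mul, re_neg, imI_neg, imJ_neg, imK_neg, re_one,
    imI_one, imJ_one, imK_one, neg_zero] at h1 h2 h3 h4
  nlinarith [sq_nonneg J.re, sq_nonneg J.imI, sq_nonneg J.imJ, sq_nonneg J.imK]

theorem algHom_complex_apply (φ : ℂ →ₐ[ℝ] ℍ) (z : ℂ) :
    φ z = z.re + z.im • φ Complex.I := by
  conv_lhs => rw [← Complex.re_add_im z]
  rw [map_add, ← Complex.real_smul, map_smul, ← Complex.coe_algebraMap, AlgHom.commutes,
    algebraMap_def]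

theorem star_algHom_complex (φ : ℂ →ₐ[ℝ] ℍ) (z : ℂ) : star (φ z) = φ (conj z) := by
  have hI : star (φ Complex.I) = -φ Complex.I :=
    star_eq_neg.2 <| re_eq_zero_of_mul_self_eq_neg_one <| by
      rw [← map_mul, Complex.I_mul_I, map_neg, map_one]
  rw [algHom_complex_apply, algHom_complex_apply φ (conj z)]
  simp [hI]

theorem norm_algHom_complex (φ : ℂ →ₐ[ℝ] ℍ) (z : ℂ) : ‖φ z‖ = ‖z‖ := by
  have h : ((normSq (φ z) : ℝ) : ℍ) = (Complex.normSq z : ℍ) := by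
    rw [← self_mul_star, star_algHom_complex, ← map_mul, Complex.mul_conj,
      ← Complex.coe_algebraMap, AlgHom.commutes, algebraMap_def]
  rw [← sq_eq_sq₀ (norm_nonneg _) (norm_nonneg _), sq, ← normSq_eq_norm_mul_self,
    ← Complex.normSq_eq_norm_sq, coe_injective h]

theorem exists_algHom_complex_apply_eq (q : ℍ) : ∃ (φ : ℂ →ₐ[ℝ] ℍ) (z : ℂ), φ z = q := by
  by_cases him : q.im = 0
  · refine ⟨ofComplex, q.re, ?_⟩
    rw [coe_ofComplex, coeComplex_coe, ← re_add_im q, him, add_zero]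
    simp
  · have hn : ‖q.im‖ ≠ 0 := norm_ne_zero_iff.2 him
    have hJ : (‖q.im‖⁻¹ • q.im) * (‖q.im‖⁻¹ • q.im) = -1 := by
      have h : ‖q.im‖⁻¹ * ‖q.im‖⁻¹ * (‖q.im‖ * ‖q.im‖) = 1 := by field_simp
      rw [smul_mul_smul_comm, ← pow_two q.im, im_sq, normSq_eq_norm_mul_self, smul_neg, smul_coe,
        h, coe_one]
    refine ⟨Complex.liftAux _ hJ, ⟨q.re, ‖q.im‖⟩, ?_⟩
    rw [Complex.liftAux_apply, smul_smul, mul_inv_cancel₀ hn, one_smul, algebraMap_def, re_add_im]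

end Quaternion

theorem AlgHom.map_tsum_smul_pow (φ : ℂ →ₐ[ℝ] ℍ) (a : ℕ → ℝ) {z : ℂ}
    (hz : Summable fun n => a n • φ z ^ n) :
    φ (∑' n, a n • z ^ n) = ∑' n, a n • φ z ^ n := by
  have hφ (n : ℕ) : a n • φ z ^ n = φ (a n • z ^ n) := by rw [map_smul, map_pow]
  have hs : Summable fun n => a n • z ^ n := by
    rw [← summable_norm_iff] at hz ⊢
    simpa only [hφ, Quaternion.norm_algHom_complex] using hz
  simp_rw [hφ]
  exact φ.toLinearMap.toContinuousLinearMap.map_tsum hs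

theorem stmt17_general (a : ℕ → ℝ)
    (hconv : ∀ q : Quaternion ℝ, ‖q‖ < 1 → Summable (fun n : ℕ => a n • q ^ n))
    (f : Quaternion ℝ → Quaternion ℝ)
    (hfdef : ∀ q : Quaternion ℝ, ‖q‖ < 1 → f q = ∑' n : ℕ, a n • q ^ n)
    (I : Quaternion ℝ) (hI : I ^ 2 = -1)
    (hstar : ∀ t : ℝ, t ∈ Set.Icc (0 : ℝ) 1 →
      ∀ z : Quaternion ℝ, ‖z‖ < 1 → (∃ x y : ℝ, z = (x : Quaternion ℝ) + y • I) →
        ∃ p : Quaternion ℝ, ‖p‖ < 1 ∧ (∃ x y : ℝ, p = (x : Quaternion ℝ) + y • I) ∧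
          t • f z = f p) :
    ∀ t : ℝ, t ∈ Set.Icc (0 : ℝ) 1 → ∀ q : Quaternion ℝ, ‖q‖ < 1 →
      ∃ p : Quaternion ℝ, ‖p‖ < 1 ∧ t • f q = f p := by
  have hf (φ : ℂ →ₐ[ℝ] ℍ) (z : ℂ) (hz : ‖z‖ < 1) : f (φ z) = φ (∑' n, a n • z ^ n) := by
    rw [← norm_algHom_complex φ] at hz
    rw [hfdef _ hz, φ.map_tsum_smul_pow a (hconv _ hz)]
  intro t ht q hq
  obtain ⟨φ, z, rfl⟩ := exists_algHom_complex_apply_eq q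
  rw [norm_algHom_complex] at hq
  set φI := Complex.liftAux I (by rwa [← sq])
  have hφI (x y : ℝ) : φI ⟨x, y⟩ = (x : ℍ) + y • I := by
    rw [Complex.liftAux_apply, algebraMap_def]
  obtain ⟨p, hp, ⟨x, y, rfl⟩, hfp⟩ := hstar t ht (φI z) (by rwa [norm_algHom_complex])
    ⟨z.re, z.im, hφI z.re z.im⟩
  rw [← hφI, norm_algHom_complex] at hp
  rw [← hφI, hf φI z hq, hf φI _ hp, ← map_smul] at hfp
  refine ⟨φ ⟨x, y⟩, by rwa [norm_algHom_complex], ?_⟩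
  rw [hf φ z hq, hf φ _ hp, ← map_smul, φI.toRingHom.injective hfp]

/-- If `f(q) = ∑ qⁿ aₙ` with real coefficients, `f(0)=0`, `f'(0)=1`, converges on the unit
ball, is injective there, and its image of one slice `B(0;1) ∩ ℂ_I` is starlike, then
`f(B(0;1))` is starlike: for every `t ∈ [0,1]` and `q` in the ball there is `p` in the ball
with `t·f(q) = f(p)`. -/
theorem stmt17 (a : ℕ → ℝ) (ha0 : a 0 = 0) (ha1 : a 1 = 1)
    (hconv : ∀ q : Quaternion ℝ, ‖q‖ < 1 → Summable (fun n : ℕ => a n • q ^ n))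
    (f : Quaternion ℝ → Quaternion ℝ)
    (hfdef : ∀ q : Quaternion ℝ, ‖q‖ < 1 → f q = ∑' n : ℕ, a n • q ^ n)
    (hinj : Set.InjOn f (Metric.ball (0 : Quaternion ℝ) 1))
    (I : Quaternion ℝ) (hI : I ^ 2 = -1)
    (hstar : ∀ t : ℝ, t ∈ Set.Icc (0 : ℝ) 1 →
      ∀ z : Quaternion ℝ, ‖z‖ < 1 → (∃ x y : ℝ, z = (x : Quaternion ℝ) + y • I) →
        ∃ p : Quaternion ℝ, ‖p‖ < 1 ∧ (∃ x y : ℝ, p = (x : Quaternion ℝ) + y • I) ∧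
          t • f z = f p) :
    ∀ t : ℝ, t ∈ Set.Icc (0 : ℝ) 1 → ∀ q : Quaternion ℝ, ‖q‖ < 1 →
      ∃ p : Quaternion ℝ, ‖p‖ < 1 ∧ t • f q = f p :=
  stmt17_general a hconv f hfdef I hI hstar
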